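/- arXiv:1911.05335 — 4 statements merged into one kernel-verified Lean document; each statement's English description precedes it below -/
import Mathlib

section
/- If D is a derivation on a commutative ring R of prime characteristic p, then the p-fold composition D^p is again a derivation on R. -/
/-!
By the general Leibniz rule, `D^[p] (a * b) = ∑_{i + j = p} (p choose i) • D^[i] a * D^[j] b`.
In characteristic `p` every binomial coefficient `p choose i` with `0 < i < p` vanishes, so only
the two extreme terms `a * D^[p] b` and `D^[p] a * b` survive.
-/

open Finset

theorem iterate_apply_mul_eq_sum_antidiagonal {R : Type*} [NonUnitalNonAssocRing R] (D : R → R)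
    (hadd : ∀ a b : R, D (a + b) = D a + D b)
    (hleib : ∀ a b : R, D (a * b) = a * D b + D a * b) (n : ℕ) (a b : R) :
    D^[n] (a * b) = ∑ ij ∈ antidiagonal n, n.choose ij.1 • (D^[ij.1] a * D^[ij.2] b) := by
  let Dh : R →+ R := AddMonoidHom.mk' D hadd
  induction n with
  | zero => simp
  | succ n ih =>
    rw [sum_antidiagonal_choose_succ_nsmul (fun i j => D^[i] a * D^[j] b) n,
      Function.iterate_succ_apply', ih]
    change Dh (∑ ij ∈ antidiagonal n, _) = _
    simp only [map_sum, map_nsmul, Dh, AddMonoidHom.mk'_apply, hleib, smul_add, sum_add_distrib,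
      ← Function.iterate_succ_apply' D]
    refine congrArg₂ _ rfl (sum_congr rfl fun ⟨i, j⟩ hij => ?_)
    rw [n.choose_symm_of_eq_add (HasAntidiagonal.mem_antidiagonal.1 hij).symm]

theorem sum_antidiagonal_choose_nsmul_eq_of_charP {R : Type*} [NonAssocSemiring R] (p : ℕ)
    [Fact p.Prime] [CharP R p] (f : ℕ → ℕ → R) :
    ∑ ij ∈ antidiagonal p, p.choose ij.1 • f ij.1 ij.2 = f 0 p + f p 0 := by
  have hp : p.Prime := Fact.out
  rw [sum_eq_add (0, p) (p, 0) (by simp [hp.ne_zero]) ?_ (by simp) (by simp)]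
  · simp
  rintro ⟨i, j⟩ hij hne
  rw [HasAntidiagonal.mem_antidiagonal] at hij
  simp only [ne_eq, Prod.mk.injEq] at hne
  have hp_dvd : p ∣ p.choose i := hp.dvd_choose_self (by omega) (by omega)
  rw [nsmul_eq_mul, (CharP.cast_eq_zero_iff R p _).mpr hp_dvd, zero_mul]

/-- If `D` is a derivation on a commutative ring `R` of prime characteristic `p`,
then the `p`-fold composition `D^[p]` is again a derivation on `R`. -/
theorem stmt_0 {R : Type*} [CommRing R] (p : ℕ) [Fact p.Prime] [CharP R p]
    (D : R → R)
    (hadd : ∀ a b : R, D (a + b) = D a + D b)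
    (hleib : ∀ a b : R, D (a * b) = a * D b + D a * b) :
    (∀ a b : R, D^[p] (a + b) = D^[p] a + D^[p] b) ∧
      (∀ a b : R, D^[p] (a * b) = a * D^[p] b + D^[p] a * b) := by
  refine ⟨iterate_map_add (AddMonoidHom.mk' D hadd) p, fun a b => ?_⟩
  rw [iterate_apply_mul_eq_sum_antidiagonal D hadd hleib,
    sum_antidiagonal_choose_nsmul_eq_of_charP p fun i j => D^[i] a * D^[j] b]
  simp
end

section
/- If f : M → M is a D-skew derivation on an R-module M over a commutative ring R of prime characteristic p (i.e., f is additive and f(ax) = a f(x) + D(a)x for a derivation D on R), then the p-fold composition f^p is a D^p-skew derivation: f^p(ax) = a f^p(x) + D^p(a) x for all a ∈ R and x ∈ M. -/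
/-!
In the ring `AddMonoid.End M`, write `a` also for scalar multiplication by `a`. The hypothesis
says `⁅f, a⁆ = D a`, hence `(ad f)^[n] a = D^[n] a`. Since `ad f = L_f - R_f` is a difference of
commuting operators, in characteristic `p` the binomial theorem gives
`(ad f)^p = L_f^p - R_f^p = ad (f^p)`, so `⁅f^p, a⁆ = D^[p] a`.
-/

theorem iterate_lie_prime_eq_lie_pow {A : Type*} [Ring A] {p : ℕ} (hp : p.Prime)
    (hpA : (p : A) = 0) (x y : A) : (⁅x, ·⁆)^[p] y = ⁅x ^ p, y⁆ := by
  let L : AddMonoid.End A := AddMonoidHom.mulLeft x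
  let R : AddMonoid.End A := AddMonoidHom.mulRight x
  have hLR : Commute L R := AddMonoidHom.ext fun z => (mul_assoc x z x).symm
  obtain ⟨r, hr⟩ := (hLR.sub_left (Commute.refl R)).exists_add_pow_prime_eq hp
  rw [sub_add_cancel, mul_assoc, mul_assoc] at hr
  have hy : (L ^ p) y = ((L - R) ^ p) y + (R ^ p) y + p • ((L - R) * (R * r)) y :=
    congr($hr y)
  have hL : (L ^ p) y = x ^ p * y := mul_left_iterate_apply x y
  have hR : (R ^ p) y = y * x ^ p := congrFun (mul_right_iterate x p) y
  have had : ((L - R) ^ p) y = (⁅x, ·⁆)^[p] y := rfl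
  rw [hL, hR, had, nsmul_eq_mul, hpA, zero_mul, add_zero] at hy
  rw [Ring.lie_def, hy, add_sub_cancel_right]

theorem AddMonoid.End.pow_prime_map_smul {R M : Type*} [Semiring R] [AddCommGroup M]
    [Module R M] (p : ℕ) [Fact p.Prime] [CharP R p] (D : R → R) (F : AddMonoid.End M)
    (hF : ∀ (a : R) (x : M), F (a • x) = a • F x + D a • x) (a : R) (x : M) :
    (F ^ p) (a • x) = a • (F ^ p) x + D^[p] a • x := by
  let σ := Module.toAddMonoidEnd R M
  have hσ : Function.Semiconj σ D (⁅F, ·⁆) := fun b => AddMonoidHom.ext fun y => by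
    change D b • y = F (b • y) - b • F y
    rw [hF, add_sub_cancel_left]
  have hpEnd : (p : AddMonoid.End M) = 0 := AddMonoidHom.ext fun y => by
    change p • y = 0
    rw [← Nat.cast_smul_eq_nsmul R, CharP.cast_eq_zero, zero_smul]
  have key := congr($(hσ.iterate_right p a) x)
  rw [iterate_lie_prime_eq_lie_pow Fact.out hpEnd] at key
  change D^[p] a • x = (F ^ p) (a • x) - a • (F ^ p) x at key
  rw [key, add_sub_cancel]

theorem stmt_8_general {R : Type*} [CommRing R] (p : ℕ) [Fact p.Prime] [CharP R p]
    {M : Type*} [AddCommGroup M] [Module R M]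
    (D : R → R)
    (f : M → M)
    (hfadd : ∀ x y : M, f (x + y) = f x + f y)
    (hf : ∀ (a : R) (x : M), f (a • x) = a • f x + D a • x) :
    ∀ (a : R) (x : M), f^[p] (a • x) = a • f^[p] x + D^[p] a • x :=
  AddMonoid.End.pow_prime_map_smul p D (AddMonoidHom.mk' f hfadd) hf

/-- If `f` is a `D`-skew derivation on an `R`-module `M`, `R` of prime characteristic
`p`, then the `p`-fold composition `f^[p]` is a `D^[p]`-skew derivation:
`f^[p] (a • x) = a • f^[p] x + D^[p] a • x`. -/
theorem stmt_8 {R : Type*} [CommRing R] (p : ℕ) [Fact p.Prime] [CharP R p]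
    {M : Type*} [AddCommGroup M] [Module R M]
    (D : R → R)
    (hDadd : ∀ a b : R, D (a + b) = D a + D b)
    (hDleib : ∀ a b : R, D (a * b) = a * D b + D a * b)
    (f : M → M)
    (hfadd : ∀ x y : M, f (x + y) = f x + f y)
    (hf : ∀ (a : R) (x : M), f (a • x) = a • f x + D a • x) :
    ∀ (a : R) (x : M), f^[p] (a • x) = a • f^[p] x + D^[p] a • x :=
  stmt_8_general p D f hfadd hf
end

section
/- Let M = P ⊕ Q be a direct sum of R-modules, and let D be a derivation on R. If there exists an additive map f : M → M with f(ax) = a f(x) + D(a)x for all a ∈ R, x ∈ M, then there exists an additive map g : P → P with g(ax) = a g(x) + D(a)x for all a ∈ R, x ∈ P. Conversely, if both P and Q admit such D-skew derivations, then so does M. -/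
/-!
A `D`-skew derivation of `N` transfers to any direct summand `P` of `N`: conjugate it by the
inclusion `i` and a retraction `r`, as `r ∘ f ∘ i`; the error term `D a • i x` is sent back to
`D a • x` because `r ∘ i = id`. Conversely, skew derivations of `P` and `Q` act componentwise on
`P × Q`.
-/

def IsSkewDerivation {R N : Type*} [Semiring R] [AddCommMonoid N] [Module R N]
    (D : R → R) (f : N → N) : Prop :=
  (∀ x y, f (x + y) = f x + f y) ∧ ∀ (a : R) (x : N), f (a • x) = a • f x + D a • x

namespace IsSkewDerivation

variable {R P Q N : Type*} [Semiring R] [AddCommMonoid P] [Module R P]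
  [AddCommMonoid Q] [Module R Q] [AddCommMonoid N] [Module R N] {D : R → R}

theorem retract {f : N → N} (hf : IsSkewDerivation D f) (i : P →ₗ[R] N) (r : N →ₗ[R] P)
    (hri : ∀ x, r (i x) = x) : IsSkewDerivation D (r ∘ f ∘ i) := by
  refine ⟨fun x y => ?_, fun a x => ?_⟩
  · simp only [Function.comp_apply, map_add, hf.1]
  · simp only [Function.comp_apply, map_smul, hf.2, map_add, hri]

theorem prodMap {g : P → P} {h : Q → Q} (hg : IsSkewDerivation D g)
    (hh : IsSkewDerivation D h) : IsSkewDerivation D (Prod.map g h) :=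
  ⟨fun x y => Prod.ext (hg.1 x.1 y.1) (hh.1 x.2 y.2),
    fun a x => Prod.ext (hg.2 a x.1) (hh.2 a x.2)⟩

end IsSkewDerivation

theorem stmt_9_general {R : Type*} [CommRing R]
    {P Q : Type*} [AddCommGroup P] [Module R P] [AddCommGroup Q] [Module R Q]
    (D : R → R) :
    ((∃ f : P × Q → P × Q, (∀ x y, f (x + y) = f x + f y) ∧
        ∀ (a : R) (x : P × Q), f (a • x) = a • f x + D a • x) →
      (∃ g : P → P, (∀ x y, g (x + y) = g x + g y) ∧
        ∀ (a : R) (x : P), g (a • x) = a • g x + D a • x)) ∧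
    (((∃ g : P → P, (∀ x y, g (x + y) = g x + g y) ∧
        ∀ (a : R) (x : P), g (a • x) = a • g x + D a • x) ∧
      (∃ h : Q → Q, (∀ x y, h (x + y) = h x + h y) ∧
        ∀ (a : R) (x : Q), h (a • x) = a • h x + D a • x)) →
      (∃ f : P × Q → P × Q, (∀ x y, f (x + y) = f x + f y) ∧
        ∀ (a : R) (x : P × Q), f (a • x) = a • f x + D a • x)) := by
  constructor
  · rintro ⟨f, hf⟩
    exact ⟨_, IsSkewDerivation.retract hf (LinearMap.inl R P Q) (LinearMap.fst R P Q)
      fun _ => rfl⟩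
  · rintro ⟨⟨g, hg⟩, ⟨h, hh⟩⟩
    exact ⟨_, IsSkewDerivation.prodMap hg hh⟩

/-- Let `M = P × Q` (the direct sum of the `R`-modules `P` and `Q`) and `D` a
derivation on `R`. If `M` admits a `D`-skew derivation, then so does `P`; and
conversely, if both `P` and `Q` admit `D`-skew derivations, then so does `M`. -/
theorem stmt_9 {R : Type*} [CommRing R]
    {P Q : Type*} [AddCommGroup P] [Module R P] [AddCommGroup Q] [Module R Q]
    (D : R → R)
    (hDadd : ∀ a b : R, D (a + b) = D a + D b)
    (hDleib : ∀ a b : R, D (a * b) = a * D b + D a * b) :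
    ((∃ f : P × Q → P × Q, (∀ x y, f (x + y) = f x + f y) ∧
        ∀ (a : R) (x : P × Q), f (a • x) = a • f x + D a • x) →
      (∃ g : P → P, (∀ x y, g (x + y) = g x + g y) ∧
        ∀ (a : R) (x : P), g (a • x) = a • g x + D a • x)) ∧
    (((∃ g : P → P, (∀ x y, g (x + y) = g x + g y) ∧
        ∀ (a : R) (x : P), g (a • x) = a • g x + D a • x) ∧
      (∃ h : Q → Q, (∀ x y, h (x + y) = h x + h y) ∧
        ∀ (a : R) (x : Q), h (a • x) = a • h x + D a • x)) →
      (∃ f : P × Q → P × Q, (∀ x y, f (x + y) = f x + f y) ∧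
        ∀ (a : R) (x : P × Q), f (a • x) = a • f x + D a • x)) :=
  stmt_9_general D
end

section
/- Let k be a field, λ : ℤ^r → ℤ a linear form, and define for each n ∈ ℕ the k-linear map Hₙ on the polynomial ring k[x₁,...,x_r] by Hₙ(x^a) = C(λ(a), n)·x^a on monomials, where C(z,n) is the generalized binomial coefficient. Then the family (Hₙ) is a Hasse–Schmidt derivation: H₀ = id and Hₙ(fg) = ∑_{i=0}^{n} Hᵢ(f)·H_{n-i}(g) for all f, g and all n. -/
/-!
Each `Hₙ` acts diagonally on monomials, with eigenvalue `C(λ(a), n)` on `x^a`. Since `λ` is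
additive, `x^a x^b = x^(a+b)` has eigenvalue `C(λ(a) + λ(b), n)`, which the Chu–Vandermonde
identity splits as `∑ᵢ C(λ(a), i) C(λ(b), n - i)`: this is the Leibniz rule on monomials, and
both sides of the rule are bilinear in `f` and `g`.
-/

open MvPolynomial Finset

theorem Ring.choose_add_eq_sum_range {R : Type*} [CommRing R] [BinomialRing R] (x y : R)
    (n : ℕ) :
    Ring.choose (x + y) n = ∑ i ∈ range (n + 1), Ring.choose x i * Ring.choose y (n - i) := by
  rw [Ring.add_choose_eq n (Commute.all x y),
    Nat.sum_antidiagonal_eq_sum_range_succ (fun i j => Ring.choose x i * Ring.choose y j)]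

namespace MvPolynomial

variable {σ R : Type*} [CommRing R]

def IsBinomialWeightFamily (w : (σ →₀ ℕ) →+ ℤ)
    (H : ℕ → MvPolynomial σ R →ₗ[R] MvPolynomial σ R) : Prop :=
  ∀ (n : ℕ) (a : σ →₀ ℕ) (c : R),
    H n (monomial a c) = ((Ring.choose (w a) n : ℤ) : R) • monomial a c

namespace IsBinomialWeightFamily

variable {w : (σ →₀ ℕ) →+ ℤ} {H : ℕ → MvPolynomial σ R →ₗ[R] MvPolynomial σ R}

theorem zero_eq_id (hH : IsBinomialWeightFamily w H) : H 0 = LinearMap.id :=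
  linearMap_ext fun a => LinearMap.ext fun c => by
    simp [hH 0 a c]

theorem map_monomial_mul_monomial (hH : IsBinomialWeightFamily w H) (n : ℕ) (a b : σ →₀ ℕ)
    (c d : R) :
    H n (monomial a c * monomial b d) =
      ∑ i ∈ range (n + 1), H i (monomial a c) * H (n - i) (monomial b d) := by
  rw [monomial_mul, hH, map_add, Ring.choose_add_eq_sum_range]
  push_cast [sum_smul]
  refine sum_congr rfl fun i _ => ?_
  rw [hH, hH, smul_mul_smul_comm, monomial_mul]

theorem map_mul (hH : IsBinomialWeightFamily w H) (f g : MvPolynomial σ R) (n : ℕ) :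
    H n (f * g) = ∑ i ∈ range (n + 1), H i f * H (n - i) g := by
  induction f using induction_on' with
  | add p q hp hq => simp only [add_mul, map_add, hp, hq, ← sum_add_distrib]
  | monomial a c =>
    induction g using induction_on' with
    | add p q hp hq => simp only [mul_add, map_add, hp, hq, ← sum_add_distrib]
    | monomial b d => exact hH.map_monomial_mul_monomial n a b c d

end IsBinomialWeightFamily

end MvPolynomial

/-- For a linear form `λ : ℤ^r → ℤ` (with `λ(eᵢ) = l i`) and the `k`-linear maps
`Hₙ` on `k[x₁,…,x_r]` defined on monomials by `Hₙ(x^a) = C(λ(a), n) • x^a`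
(generalized binomial coefficient, mapped into `k`), the family `(Hₙ)` is a
Hasse–Schmidt derivation: `H₀ = id` and `Hₙ(fg) = ∑_{i≤n} Hᵢ(f) H_{n-i}(g)`. -/
theorem stmt_13 {k : Type*} [Field k] (r : ℕ) (l : Fin r → ℤ)
    (H : ℕ → MvPolynomial (Fin r) k →ₗ[k] MvPolynomial (Fin r) k)
    (hH : ∀ (n : ℕ) (a : Fin r →₀ ℕ) (c : k),
      H n (monomial a c) =
        ((Ring.choose (∑ i : Fin r, l i * (a i : ℤ)) n : ℤ) : k) • monomial a c) :
    H 0 = LinearMap.id ∧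
      ∀ (f g : MvPolynomial (Fin r) k) (n : ℕ),
        H n (f * g) = ∑ i ∈ Finset.range (n + 1), H i f * H (n - i) g := by
  have hweight (a : Fin r →₀ ℕ) : ∑ i : Fin r, l i * (a i : ℤ) = Finsupp.weight l a := by
    simp only [Finsupp.weight_eq_sum, nsmul_eq_mul, mul_comm]
  have hH' : IsBinomialWeightFamily (Finsupp.weight l) H := fun n a c => by
    rw [hH, hweight]
  exact ⟨hH'.zero_eq_id, hH'.map_mul⟩
end
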